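/- arXiv:1912.01245 — 3 statements merged into one kernel-verified Lean document; each statement's English description precedes it below -/
import Mathlib

section
/- For every ν > 2 and every t ∈ ℝ, the following integral identity holds: −i t ∫_{-∞}^{∞} x² e^{itx} f_ν(x) dx + (ν − 1) ∫_{-∞}^{∞} x e^{itx} f_ν(x) dx − i ν t ∫_{-∞}^{∞} e^{itx} f_ν(x) dx = 0, where all three integrals converge absolutely because ν > 2. -/
open MeasureTheory Real Complex

/-!
The function `g(x) = e^{itx} (ν + x²) f_ν(x)` is integrable for `ν > 2`, because
`(ν + x²) f_ν(x)` is a multiple of `(1 + x²/ν)^{-(ν-1)/2}`. Since `f_ν` solves the ODE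
`((ν + x²) f_ν)' = -(ν - 1) x f_ν`, the derivative of `g` is
`(i t (x² + ν) - (ν - 1) x) e^{itx} f_ν(x)`, and the integral of the derivative of an
integrable function with integrable derivative vanishes.
-/

/-- Student's t density with `ν` degrees of freedom. -/
noncomputable def studentDensity (ν x : ℝ) : ℝ :=
  (Real.Gamma ((ν + 1) / 2) / (Real.sqrt (Real.pi * ν) * Real.Gamma (ν / 2))) *
    (1 + x ^ 2 / ν) ^ (-(ν + 1) / 2)

noncomputable def studentNormConst (ν : ℝ) : ℝ :=
  Real.Gamma ((ν + 1) / 2) / (Real.sqrt (Real.pi * ν) * Real.Gamma (ν / 2))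

lemma studentDensity_eq (ν x : ℝ) :
    studentDensity ν x = studentNormConst ν * (1 + x ^ 2 / ν) ^ (-(ν + 1) / 2) := rfl

lemma studentDensity_nonneg {ν : ℝ} (hν : 0 < ν) (x : ℝ) : 0 ≤ studentDensity ν x := by
  have := Real.Gamma_pos_of_pos (by linarith : 0 < (ν + 1) / 2)
  have := Real.Gamma_pos_of_pos (by linarith : 0 < ν / 2)
  rw [studentDensity_eq, studentNormConst]
  positivity

lemma measurable_studentDensity (ν : ℝ) : Measurable (studentDensity ν) := by
  unfold studentDensity
  fun_prop

lemma integrable_one_add_sq_div_rpow_neg {ν r : ℝ} (hν : 0 < ν) (hr : 1 < r) :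
    Integrable fun x : ℝ => (1 + x ^ 2 / ν) ^ (-r / 2) := by
  have h := (integrable_rpow_neg_one_add_norm_sq (E := ℝ) (μ := volume)
    (by simpa using hr)).comp_div (R := √ν) (by positivity)
  refine h.congr (Filter.Eventually.of_forall fun x => ?_)
  simp [div_pow, Real.sq_sqrt hν.le]

lemma add_sq_mul_studentDensity {ν : ℝ} (hν : 0 < ν) (x : ℝ) :
    (ν + x ^ 2) * studentDensity ν x =
      ν * studentNormConst ν * (1 + x ^ 2 / ν) ^ (-(ν - 1) / 2) := by
  have hu : 0 < 1 + x ^ 2 / ν := by positivity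
  rw [studentDensity_eq, show -(ν - 1) / 2 = 1 + -(ν + 1) / 2 by ring, Real.rpow_add hu,
    Real.rpow_one]
  field_simp

lemma integrable_add_sq_mul_studentDensity {ν : ℝ} (hν : 2 < ν) :
    Integrable fun x => (ν + x ^ 2) * studentDensity ν x := by
  simp_rw [add_sq_mul_studentDensity (by linarith : 0 < ν)]
  exact (integrable_one_add_sq_div_rpow_neg (by linarith) (by linarith : 1 < ν - 1)).const_mul _

lemma hasDerivAt_add_sq_mul_studentDensity {ν : ℝ} (hν : 0 < ν) (x : ℝ) :
    HasDerivAt (fun y => (ν + y ^ 2) * studentDensity ν y)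
      (-((ν - 1) * x * studentDensity ν x)) x := by
  simp_rw [add_sq_mul_studentDensity hν]
  have hu : 0 < 1 + x ^ 2 / ν := by positivity
  have hinner : HasDerivAt (fun y : ℝ => 1 + y ^ 2 / ν) (2 * x / ν) x := by
    simpa using ((hasDerivAt_pow 2 x).div_const ν).const_add 1
  have := (hinner.rpow_const (p := -(ν - 1) / 2) (Or.inl hu.ne')).const_mul
    (ν * studentNormConst ν)
  refine this.congr_deriv ?_
  rw [studentDensity_eq, show -(ν - 1) / 2 - 1 = -(ν + 1) / 2 by ring]
  field_simp

lemma hasDerivAt_cexp_mul_add_sq_mul_studentDensity {ν : ℝ} (hν : 0 < ν) (t x : ℝ) :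
    HasDerivAt (fun y : ℝ => exp (I * t * y) * (((ν + y ^ 2) * studentDensity ν y : ℝ) : ℂ))
      (I * t * ((x : ℂ) ^ 2 * exp (I * t * x) * (studentDensity ν x : ℂ))
        + I * ν * t * (exp (I * t * x) * (studentDensity ν x : ℂ))
        - (ν - 1) * ((x : ℂ) * exp (I * t * x) * (studentDensity ν x : ℂ))) x := by
  have hexp : HasDerivAt (fun y : ℝ => exp (I * t * y)) (exp (I * t * x) * (I * t)) x := by
    simpa using ((hasDerivAt_id x).ofReal_comp.const_mul (I * t)).cexp
  refine (hexp.mul (hasDerivAt_add_sq_mul_studentDensity hν x).ofReal_comp).congr_deriv ?_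
  push_cast
  ring

lemma integrable_pow_mul_cexp_mul_studentDensity {ν : ℝ} (hν : 2 < ν) (t : ℝ) {k : ℕ}
    (hk : k ≤ 2) :
    Integrable fun x : ℝ => (x : ℂ) ^ k * exp (I * t * x) * (studentDensity ν x : ℂ) := by
  refine (integrable_add_sq_mul_studentDensity hν).mono' ?_
    (Filter.Eventually.of_forall fun x => ?_)
  · have := measurable_studentDensity ν
    fun_prop
  have hpow : |x| ^ k ≤ ν + x ^ 2 := by
    interval_cases k
    · nlinarith [sq_nonneg x]
    · nlinarith [_root_.sq_abs x, sq_nonneg (|x| - 1)]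
    · nlinarith [_root_.sq_abs x]
  have hf := studentDensity_nonneg (by linarith : 0 < ν) x
  simp only [norm_mul, norm_pow, Complex.norm_real, Real.norm_eq_abs, abs_of_nonneg hf,
    Complex.norm_exp]
  simpa using mul_le_mul_of_nonneg_right hpow hf

theorem studentCharFun_integral_identity (ν : ℝ) (hν : 2 < ν) (t : ℝ) :
    Integrable (fun x : ℝ => (x : ℂ) ^ 2 * Complex.exp (Complex.I * t * x) *
      (studentDensity ν x : ℂ)) ∧
    Integrable (fun x : ℝ => (x : ℂ) * Complex.exp (Complex.I * t * x) *
      (studentDensity ν x : ℂ)) ∧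
    Integrable (fun x : ℝ => Complex.exp (Complex.I * t * x) * (studentDensity ν x : ℂ)) ∧
    -Complex.I * t * (∫ x : ℝ, (x : ℂ) ^ 2 * Complex.exp (Complex.I * t * x) *
        (studentDensity ν x : ℂ)) +
      (ν - 1) * (∫ x : ℝ, (x : ℂ) * Complex.exp (Complex.I * t * x) *
        (studentDensity ν x : ℂ)) -
      Complex.I * ν * t * (∫ x : ℝ, Complex.exp (Complex.I * t * x) *
        (studentDensity ν x : ℂ)) = 0 := by
  have h2 := integrable_pow_mul_cexp_mul_studentDensity hν t le_rfl
  have h1 := integrable_pow_mul_cexp_mul_studentDensity hν t one_le_two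
  have h0 := integrable_pow_mul_cexp_mul_studentDensity hν t zero_le_two
  simp only [pow_one, pow_zero, one_mul] at h1 h0
  refine ⟨h2, h1, h0, ?_⟩
  have hg : Integrable fun y : ℝ =>
      exp (I * t * y) * (((ν + y ^ 2) * studentDensity ν y : ℝ) : ℂ) :=
    ((h0.const_mul (ν : ℂ)).add h2).congr (Filter.Eventually.of_forall fun x => by
      simp only [Pi.add_apply]
      push_cast
      ring)
  have h := integral_eq_zero_of_hasDerivAt_of_integrable
    (hasDerivAt_cexp_mul_add_sq_mul_studentDensity (by linarith) t)
    (((h2.const_mul _).add (h0.const_mul _)).sub (h1.const_mul _)) hg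
  rw [integral_sub, integral_add,
    integral_const_mul, integral_const_mul, integral_const_mul] at h
  · linear_combination -h
  all_goals fun_prop
end

section
/- (Main theorem: characteristic function of Student's t-distribution, all degrees of freedom.) For every ν > 0 and every t ∈ ℝ with t ≠ 0, ∫_{-∞}^{∞} e^{itx} f_ν(x) dx = ((√ν · |t|)^{ν/2} / (Γ(ν/2) · 2^{ν/2 − 1})) · (1/2) ∫_0^{∞} u^{ν/2 − 1} e^{−√ν · |t| · (u + u^{−1})/2} du. -/
/-!
Subordinate the Student kernel to Gaussians:
`(1 + c x²)^(-q) = Γ(q)⁻¹ ∫₀^∞ s^(q-1) e^(-s) e^(-c s x²) ds`.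
For `q > 1/2` the double integral converges absolutely, so Fubini lets us take the Fourier
transform of each Gaussian first, which leaves `∫₀^∞ s^(q-3/2) e^(-s - t²/(4cs)) ds`.
With `c = 1/ν`, `q = (ν+1)/2` and `a = √ν |t|`, the substitution `s = a u / 2` turns this into
the Bessel integral `∫₀^∞ u^(ν/2-1) e^(-a (u + u⁻¹)/2) du`.
-/

open MeasureTheory Real Complex Set

theorem integral_cexp_mul_ofReal_exp_neg_mul_sq {b : ℝ} (hb : 0 < b) (t : ℝ) :
    ∫ x : ℝ, cexp (I * t * x) * (rexp (-b * x ^ 2) : ℂ) =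
      ((√(π / b) * rexp (-(t ^ 2 / (4 * b))) : ℝ) : ℂ) := by
  have h := fourierIntegral_gaussian (b := (b : ℂ)) (by simpa using hb) (t : ℂ)
  push_cast [ofReal_exp]
  rw [h, sqrt_eq_rpow, ofReal_cpow (by positivity)]
  push_cast
  ring_nf

theorem rpow_sub_one_mul_sqrt_div_mul {s : ℝ} (hs : 0 < s) (q a c : ℝ) :
    s ^ (q - 1) * √(a / (c * s)) = √(a / c) * s ^ (q - 3 / 2) := by
  rw [← div_div, sqrt_div' _ hs.le, sqrt_eq_rpow s,
    show q - 3 / 2 = q - 1 - 1 / 2 by ring, rpow_sub hs (q - 1)]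
  ring

noncomputable def gammaGaussIntegrand (c q t s x : ℝ) : ℂ :=
  cexp (I * t * x) * ((s ^ (q - 1) * rexp (-((1 + c * x ^ 2) * s)) : ℝ) : ℂ)

section
variable {c q : ℝ}

theorem gammaGaussIntegrand_eq_mul_gaussian (t s x : ℝ) :
    gammaGaussIntegrand c q t s x =
      ((s ^ (q - 1) * rexp (-s) : ℝ) : ℂ) *
        (cexp (I * t * x) * (rexp (-(c * s) * x ^ 2) : ℂ)) := by
  rw [gammaGaussIntegrand, show -((1 + c * x ^ 2) * s) = -s + -(c * s) * x ^ 2 by ring,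
    Real.exp_add]
  push_cast
  ring

theorem norm_gammaGaussIntegrand (t : ℝ) {s : ℝ} (hs : 0 ≤ s) (x : ℝ) :
    ‖gammaGaussIntegrand c q t s x‖ = s ^ (q - 1) * rexp (-s) * rexp (-(c * s) * x ^ 2) := by
  have h_phase : ‖cexp (I * t * x)‖ = 1 := by rw [norm_exp]; simp
  rw [gammaGaussIntegrand_eq_mul_gaussian, norm_mul, norm_mul, h_phase, one_mul, norm_real, norm_real,
    norm_of_nonneg (by positivity), norm_of_nonneg (by positivity)]

theorem integral_gammaGaussIntegrand (hc : 0 < c) (t : ℝ) {s : ℝ} (hs : 0 < s) :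
    ∫ x, gammaGaussIntegrand c q t s x =
      ((s ^ (q - 1) * rexp (-s) * (√(π / (c * s)) * rexp (-(t ^ 2 / (4 * (c * s))))) : ℝ) :
        ℂ) := by
  simp_rw [gammaGaussIntegrand_eq_mul_gaussian]
  rw [integral_const_mul, integral_cexp_mul_ofReal_exp_neg_mul_sq (by positivity)]
  push_cast
  ring

theorem integral_norm_gammaGaussIntegrand (t : ℝ) {s : ℝ} (hs : 0 ≤ s) :
    ∫ x, ‖gammaGaussIntegrand c q t s x‖ = s ^ (q - 1) * rexp (-s) * √(π / (c * s)) := by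
  simp_rw [norm_gammaGaussIntegrand t hs]
  rw [integral_const_mul, integral_gaussian]

theorem setIntegral_gammaGaussIntegrand (hc : 0 ≤ c) (hq : 0 < q) (t x : ℝ) :
    ∫ s in Ioi 0, gammaGaussIntegrand c q t s x =
      Real.Gamma q * (cexp (I * t * x) * (((1 + c * x ^ 2) ^ (-q) : ℝ) : ℂ)) := by
  have hr : 0 < 1 + c * x ^ 2 := by positivity
  simp only [gammaGaussIntegrand]
  rw [integral_const_mul, integral_complex_ofReal, integral_rpow_mul_exp_neg_mul_Ioi hq hr,
    one_div, inv_rpow hr.le, ← rpow_neg hr.le]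
  push_cast
  ring

theorem integrable_gammaGaussIntegrand (hc : 0 < c) (hq : 1 / 2 < q) (t : ℝ) :
    Integrable (Function.uncurry (gammaGaussIntegrand c q t))
      ((volume.restrict (Ioi 0)).prod volume) := by
  have h_meas : Measurable (Function.uncurry (gammaGaussIntegrand c q t)) := by
    unfold gammaGaussIntegrand Function.uncurry
    fun_prop
  rw [integrable_prod_iff h_meas.aestronglyMeasurable]
  constructor
  · filter_upwards [ae_restrict_mem measurableSet_Ioi] with s (hs : 0 < s)
    refine ((integrable_exp_neg_mul_sq (by positivity : 0 < c * s)).const_mul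
      (s ^ (q - 1) * rexp (-s))).mono'
      (h_meas.comp measurable_prodMk_left).aestronglyMeasurable (.of_forall fun x => ?_)
    exact (norm_gammaGaussIntegrand t hs.le x).le
  · have h_gamma := (GammaIntegral_convergent (by linarith : 0 < q - 1 / 2)).const_mul √(π / c)
    refine IntegrableOn.congr_fun h_gamma (fun s (hs : 0 < s) => ?_) measurableSet_Ioi
    simp only [Function.uncurry_apply_pair]
    rw [integral_norm_gammaGaussIntegrand t hs.le, mul_right_comm,
      rpow_sub_one_mul_sqrt_div_mul hs, show q - 1 / 2 - 1 = q - 3 / 2 by ring]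
    ring

theorem integral_cexp_mul_one_add_mul_sq_rpow_neg (hc : 0 < c) (hq : 1 / 2 < q) (t : ℝ) :
    ∫ x : ℝ, cexp (I * t * x) * (((1 + c * x ^ 2) ^ (-q) : ℝ) : ℂ) =
      ((Real.Gamma q)⁻¹ * √(π / c) *
        ∫ s in Ioi 0, s ^ (q - 3 / 2) * rexp (-(s + t ^ 2 / (4 * c * s))) : ℝ) := by
  have hΓ : (Real.Gamma q : ℂ) ≠ 0 := ofReal_ne_zero.mpr (Gamma_pos_of_pos (by linarith)).ne'
  have h_inner : ∀ s ∈ Ioi (0 : ℝ), ∫ x, gammaGaussIntegrand c q t s x =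
      ((√(π / c) * (s ^ (q - 3 / 2) * rexp (-(s + t ^ 2 / (4 * c * s))))) : ℝ) := by
    intro s (hs : 0 < s)
    rw [integral_gammaGaussIntegrand hc t hs, mul_assoc, mul_left_comm (rexp (-s)),
      ← mul_assoc, rpow_sub_one_mul_sqrt_div_mul hs, ← Real.exp_add, ← mul_assoc 4, neg_add]
    ring_nf
  calc ∫ x : ℝ, cexp (I * t * x) * (((1 + c * x ^ 2) ^ (-q) : ℝ) : ℂ)
      = ∫ x : ℝ, (Real.Gamma q : ℂ)⁻¹ * ∫ s in Ioi 0, gammaGaussIntegrand c q t s x := by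
        simp_rw [setIntegral_gammaGaussIntegrand hc.le (by linarith : 0 < q),
          inv_mul_cancel_left₀ hΓ]
    _ = (Real.Gamma q : ℂ)⁻¹ * ∫ s in Ioi 0, ∫ x, gammaGaussIntegrand c q t s x := by
        rw [integral_const_mul, integral_integral_swap (integrable_gammaGaussIntegrand hc hq t)]
    _ = _ := by
        rw [setIntegral_congr_fun measurableSet_Ioi h_inner, integral_complex_ofReal,
          integral_const_mul]
        push_cast
        ring
end

theorem setIntegral_rpow_mul_exp_neg_add_sq_div {a : ℝ} (ha : 0 < a) (p : ℝ) :
    ∫ s in Ioi 0, s ^ (p - 1) * rexp (-(s + a ^ 2 / (4 * s))) =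
      (a / 2) ^ p * ∫ u in Ioi 0, u ^ (p - 1) * rexp (-a * (u + u⁻¹) / 2) := by
  have ha2 : 0 < a / 2 := by positivity
  have h_scaled : ∀ u ∈ Ioi (0 : ℝ),
      (a / 2 * u) ^ (p - 1) * rexp (-(a / 2 * u + a ^ 2 / (4 * (a / 2 * u)))) =
        (a / 2) ^ (p - 1) * (u ^ (p - 1) * rexp (-a * (u + u⁻¹) / 2)) := by
    intro u (hu : 0 < u)
    rw [mul_rpow ha2.le hu.le]
    field_simp
    ring_nf
  have h_subst :=
    integral_comp_mul_left_Ioi (fun s => s ^ (p - 1) * rexp (-(s + a ^ 2 / (4 * s)))) 0 ha2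
  rw [setIntegral_congr_fun measurableSet_Ioi h_scaled, integral_const_mul, mul_zero, smul_eq_mul,
    rpow_sub_one ha2.ne', eq_inv_mul_iff_mul_eq₀ ha2.ne'] at h_subst
  rw [← h_subst]
  field_simp

theorem studentCharFun_formula (ν : ℝ) (hν : 0 < ν) (t : ℝ) (ht : t ≠ 0) :
    (∫ x : ℝ, Complex.exp (Complex.I * t * x) * (studentDensity ν x : ℂ)) =
      (((Real.sqrt ν * |t|) ^ (ν / 2) / (Real.Gamma (ν / 2) * (2 : ℝ) ^ (ν / 2 - 1))) *
        ((1 / 2) * ∫ u in Set.Ioi (0 : ℝ),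
          u ^ (ν / 2 - 1) * Real.exp (-(Real.sqrt ν * |t|) * (u + u⁻¹) / 2)) : ℝ) := by
  set a := √ν * |t| with ha_def
  have ha : 0 < a := by positivity
  have h_density : ∀ x, studentDensity ν x = Real.Gamma ((ν + 1) / 2) /
      (√(π * ν) * Real.Gamma (ν / 2)) * (1 + ν⁻¹ * x ^ 2) ^ (-((ν + 1) / 2)) := by
    intro x
    rw [studentDensity, neg_div, div_eq_inv_mul (x ^ 2)]
  have h_exponent : ∀ s, t ^ 2 / (4 * ν⁻¹ * s) = a ^ 2 / (4 * s) := by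
    intro s
    rw [ha_def, mul_pow, sq_sqrt hν.le, sq_abs]
    field_simp
  simp_rw [h_density, ofReal_mul, mul_left_comm (cexp _)]
  rw [integral_const_mul,
    integral_cexp_mul_one_add_mul_sq_rpow_neg (inv_pos.mpr hν) (by linarith),
    show (ν + 1) / 2 - 3 / 2 = ν / 2 - 1 by ring]
  simp_rw [h_exponent]
  rw [setIntegral_rpow_mul_exp_neg_add_sq_div ha, div_inv_eq_mul, div_rpow ha.le zero_le_two,
    rpow_sub_one two_ne_zero]
  have hΓ₁ := Gamma_pos_of_pos (by positivity : 0 < (ν + 1) / 2)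
  have hΓ₂ := Gamma_pos_of_pos (by positivity : 0 < ν / 2)
  have h_sqrt : 0 < √(π * ν) := by positivity
  norm_cast
  field_simp
end

section
/- Let ν > 0 and let g : (0,∞) → ℝ be twice differentiable and satisfy x g″(x) − (ν − 1) g′(x) − ν x g(x) = 0 for all x > 0. Then the function f defined on (0,∞) by f(x) = (x/√ν)^{−ν/2} · g(x/√ν) is twice differentiable and satisfies the modified Bessel differential equation of order ν/2: x² f″(x) + x f′(x) − (x² + (ν/2)²) f(x) = 0 for all x > 0. -/
open Real Topology

/-!
Writing `g(y) = y^(ν/2) h(y)`, the operator `y g'' - (ν - 1) g' - ν y g` becomes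
`y^(ν/2 - 1)` times `y² h'' + y h' - (ν y² + (ν/2)²) h`, so `h` solves a rescaled modified Bessel
equation of order `ν/2`; the change of variable `y = x / √ν` removes the factor `ν`.
-/

section ComposeDivConst

variable {h : ℝ → ℝ} {s x : ℝ}

theorem deriv_comp_div_const (h : ℝ → ℝ) (s : ℝ) :
    deriv (fun x => h (x / s)) = fun x => deriv h (x / s) / s := by
  funext x
  simp only [div_eq_inv_mul]
  exact deriv_comp_mul_left s⁻¹ h x

theorem DifferentiableAt.comp_div_const (hh : DifferentiableAt ℝ h (x / s)) :
    DifferentiableAt ℝ (fun x => h (x / s)) x :=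
  hh.comp x (differentiableAt_id.div_const s)

theorem deriv_deriv_comp_div_const (h : ℝ → ℝ) (s : ℝ) :
    deriv (deriv fun x => h (x / s)) = fun x => deriv (deriv h) (x / s) / s ^ 2 := by
  funext x
  rw [deriv_comp_div_const, deriv_div_const, deriv_comp_div_const, div_div, sq]

theorem modifiedBessel_comp_div_const {μ : ℝ} (hs : s ≠ 0)
    (hh : (x / s) ^ 2 * deriv (deriv h) (x / s) + x / s * deriv h (x / s)
      - (s ^ 2 * (x / s) ^ 2 + μ ^ 2) * h (x / s) = 0) :
    x ^ 2 * deriv (deriv fun x => h (x / s)) x + x * deriv (fun x => h (x / s)) x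
      - (x ^ 2 + μ ^ 2) * h (x / s) = 0 := by
  rw [deriv_deriv_comp_div_const, deriv_comp_div_const]
  field_simp at hh ⊢
  linear_combination hh

end ComposeDivConst

section RpowNegMul

variable {g : ℝ → ℝ} {a y : ℝ}

theorem hasDerivAt_rpow_neg_mul (hy : 0 < y) (hg : DifferentiableAt ℝ g y) :
    HasDerivAt (fun y => y ^ (-a) * g y) (y ^ (-a) * (deriv g y - a * g y / y)) y := by
  refine ((hasDerivAt_rpow_const (Or.inl hy.ne')).mul hg.hasDerivAt).congr_deriv ?_
  rw [rpow_sub_one hy.ne']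
  ring

theorem hasDerivAt_deriv_rpow_neg_mul (hy : 0 < y) (hg : ∀ z > 0, DifferentiableAt ℝ g z)
    (hg' : ∀ z > 0, DifferentiableAt ℝ (deriv g) z) :
    HasDerivAt (deriv fun y => y ^ (-a) * g y)
      (y ^ (-a) * (deriv (deriv g) y - 2 * a * deriv g y / y + (a + a ^ 2) * g y / y ^ 2)) y := by
  have hderiv : deriv (fun y => y ^ (-a) * g y) =ᶠ[𝓝 y]
      fun y => y ^ (-a) * (deriv g y - a * g y / y) := by
    filter_upwards [Ioi_mem_nhds hy] with z hz using (hasDerivAt_rpow_neg_mul hz (hg z hz)).deriv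
  have hquot : HasDerivAt (fun y => deriv g y - a * g y / y)
      (deriv (deriv g) y - (a * deriv g y * y - a * g y * 1) / y ^ 2) y :=
    (hg' y hy).hasDerivAt.sub (((hg y hy).hasDerivAt.const_mul a).div (hasDerivAt_id' y) hy.ne')
  refine (((hasDerivAt_rpow_const (Or.inl hy.ne')).mul hquot).congr_deriv ?_).congr_of_eventuallyEq
    hderiv
  rw [rpow_sub_one hy.ne']
  field_simp
  ring

theorem modifiedBessel_rpow_neg_mul (c : ℝ) (hy : 0 < y)
    (hg : ∀ z > 0, DifferentiableAt ℝ g z)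
    (hg' : ∀ z > 0, DifferentiableAt ℝ (deriv g) z) :
    y ^ 2 * deriv (deriv fun y => y ^ (-a) * g y) y + y * deriv (fun y => y ^ (-a) * g y) y
      - (c * y ^ 2 + a ^ 2) * (y ^ (-a) * g y)
      = y ^ (-a) * y * (y * deriv (deriv g) y - (2 * a - 1) * deriv g y - c * y * g y) := by
  rw [(hasDerivAt_deriv_rpow_neg_mul hy hg hg').deriv, (hasDerivAt_rpow_neg_mul hy (hg y hy)).deriv]
  field_simp
  ring

end RpowNegMul

theorem studentODE_to_bessel (ν : ℝ) (hν : 0 < ν) (g : ℝ → ℝ)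
    (hg : ∀ x > 0, DifferentiableAt ℝ g x)
    (hg' : ∀ x > 0, DifferentiableAt ℝ (deriv g) x)
    (hODE : ∀ x > 0, x * deriv (deriv g) x - (ν - 1) * deriv g x - ν * x * g x = 0) :
    (∀ x > 0, DifferentiableAt ℝ
      (fun x : ℝ => (x / Real.sqrt ν) ^ (-(ν / 2)) * g (x / Real.sqrt ν)) x) ∧
    (∀ x > 0, DifferentiableAt ℝ
      (deriv (fun x : ℝ => (x / Real.sqrt ν) ^ (-(ν / 2)) * g (x / Real.sqrt ν))) x) ∧
    (∀ x > 0,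
      x ^ 2 * deriv (deriv
          (fun x : ℝ => (x / Real.sqrt ν) ^ (-(ν / 2)) * g (x / Real.sqrt ν))) x
        + x * deriv (fun x : ℝ => (x / Real.sqrt ν) ^ (-(ν / 2)) * g (x / Real.sqrt ν)) x
        - (x ^ 2 + (ν / 2) ^ 2) *
            ((x / Real.sqrt ν) ^ (-(ν / 2)) * g (x / Real.sqrt ν)) = 0) := by
  have hs : 0 < √ν := sqrt_pos.mpr hν
  have hpos : ∀ x > 0, 0 < x / √ν := fun x hx => div_pos hx hs
  refine ⟨fun x hx => ?_, fun x hx => ?_, fun x hx => ?_⟩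
  · exact (hasDerivAt_rpow_neg_mul (hpos x hx) (hg _ (hpos x hx))).differentiableAt.comp_div_const
  · rw [deriv_comp_div_const (fun y => y ^ (-(ν / 2)) * g y)]
    have hh' := (hasDerivAt_deriv_rpow_neg_mul (a := ν / 2) (hpos x hx) hg hg').differentiableAt
    exact hh'.comp_div_const.div_const _
  · refine modifiedBessel_comp_div_const (h := fun y => y ^ (-(ν / 2)) * g y) hs.ne' ?_
    rw [sq_sqrt hν.le, modifiedBessel_rpow_neg_mul ν (hpos x hx) hg hg',
      show 2 * (ν / 2) - 1 = ν - 1 by ring, hODE _ (hpos x hx), mul_zero]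
end
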